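/- (Theorem 2, second bound.) In the estimated-eigensystem smoothing spline setting, ‖f̌₁ − f̃₁‖² ≤ 2ζ₄ Σ_{k=1}^K ‖Φ̌_k − Φ_k‖² + 6‖č‖² Σ_{k=1}^K [δ̌_k² Σ_{i=1}^n (Ǔ_{ik} − U_{ik})²] + 6 n κ² ‖č‖² Σ_{k=1}^K (δ̌_k − δ_k)² + 6 ζ₃' ‖Σ̌ − Σ̃‖_F². -/

import Mathlib

open Matrix BigOperators

/-- Squared Frobenius norm of a real matrix. -/
noncomputable def frobSq {m n : ℕ} (M : Matrix (Fin m) (Fin n) ℝ) : ℝ :=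
  ∑ i, ∑ j, (M i j) ^ 2

/-- Squared Euclidean norm of a real vector. -/
noncomputable def vnormSq {m : ℕ} (v : Fin m → ℝ) : ℝ := ∑ i, (v i) ^ 2

/-!
Write `f̌₁ - f̃₁ = Σ ǎ_k (Φ̌_k - Φ_k) + Σ (ǎ_k - ã_k) Φ_k`. The first sum is controlled by
Cauchy–Schwarz, the second has squared norm `Σ (ǎ_k - ã_k)²` by orthonormality, and
`ǎ_k - ã_k` splits into three terms carrying the perturbations of `Ǔ`, of `δ̌` and of `č`.
The last one needs `‖č - c̃‖²`: since `Tᵀ c = 0`, `c = Q₂ v` with `(Q₂ᵀ Σ Q₂ + nλ) v = Q₂ᵀ y`,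
so subtracting the two reduced systems gives
`(Q₂ᵀ Σ̌ Q₂ + nλ)(v̌ - ṽ) = Q₂ᵀ (Σ̃ - Σ̌) Q₂ ṽ`, and for positive definite `M` and `c ≥ 0` the
inverse of `M + c` has squared Frobenius norm at most `Σ_k λ_k(M)⁻²`.
-/

section Norms

variable {m l q : ℕ}

lemma vnormSq_nonneg (v : Fin m → ℝ) : 0 ≤ vnormSq v :=
  Finset.sum_nonneg fun _ _ => sq_nonneg _

lemma frobSq_nonneg (M : Matrix (Fin m) (Fin l) ℝ) : 0 ≤ frobSq M :=
  Finset.sum_nonneg fun _ _ => Finset.sum_nonneg fun _ _ => sq_nonneg _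

lemma frobSq_transpose (M : Matrix (Fin m) (Fin l) ℝ) : frobSq Mᵀ = frobSq M :=
  Finset.sum_comm

lemma frobSq_sub_comm (A B : Matrix (Fin m) (Fin l) ℝ) : frobSq (A - B) = frobSq (B - A) := by
  simp only [frobSq, Matrix.sub_apply]
  exact Finset.sum_congr rfl fun i _ => Finset.sum_congr rfl fun j _ => sub_sq_comm _ _

lemma sq_sum_mul_le (v u : Fin m → ℝ) : (∑ i, v i * u i) ^ 2 ≤ vnormSq v * vnormSq u :=
  Finset.sum_mul_sq_le_sq_mul_sq _ _ _

lemma vnormSq_le_of_abs_le {u : Fin m → ℝ} {κ : ℝ} (hu : ∀ i, |u i| ≤ κ) :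
    vnormSq u ≤ m * κ ^ 2 :=
  calc vnormSq u ≤ ∑ _i : Fin m, κ ^ 2 := Finset.sum_le_sum fun i _ => by
        simpa only [sq_abs] using pow_le_pow_left₀ (abs_nonneg _) (hu i) 2
    _ = m * κ ^ 2 := by simp

lemma vnormSq_mulVec_le (E : Matrix (Fin m) (Fin l) ℝ) (v : Fin l → ℝ) :
    vnormSq (E *ᵥ v) ≤ frobSq E * vnormSq v := by
  rw [vnormSq, frobSq, Finset.sum_mul]
  exact Finset.sum_le_sum fun i _ => sq_sum_mul_le (E i) v

lemma frobSq_mul_le (A : Matrix (Fin m) (Fin l) ℝ) (B : Matrix (Fin l) (Fin q) ℝ) :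
    frobSq (A * B) ≤ frobSq A * frobSq B :=
  calc frobSq (A * B) ≤ ∑ i, ∑ j, vnormSq (A i) * vnormSq (Bᵀ j) :=
        Finset.sum_le_sum fun i _ => Finset.sum_le_sum fun j _ => sq_sum_mul_le (A i) (Bᵀ j)
    _ = frobSq A * frobSq Bᵀ := by simp only [frobSq, vnormSq, Finset.sum_mul_sum]
    _ = frobSq A * frobSq B := by rw [frobSq_transpose]

lemma frobSq_transpose_mul_mul_le (Q : Matrix (Fin m) (Fin q) ℝ) (D : Matrix (Fin m) (Fin m) ℝ) :
    frobSq (Qᵀ * D * Q) ≤ frobSq Q ^ 2 * frobSq D :=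
  calc frobSq (Qᵀ * D * Q) ≤ frobSq Qᵀ * frobSq D * frobSq Q :=
        (frobSq_mul_le _ _).trans
          (mul_le_mul_of_nonneg_right (frobSq_mul_le _ _) (frobSq_nonneg Q))
    _ = frobSq Q ^ 2 * frobSq D := by rw [frobSq_transpose]; ring

lemma frobSq_eq_of_transpose_mul_self {Q : Matrix (Fin m) (Fin q) ℝ} (h : Qᵀ * Q = 1) :
    frobSq Q = q := by
  have : frobSq Q = trace (Qᵀ * Q) := by
    simp only [frobSq, trace, diag, mul_apply, transpose_apply, sq]
    exact Finset.sum_comm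
  rw [this, h, trace_one, Fintype.card_fin]

lemma vnormSq_eq_dotProduct (v : Fin m → ℝ) : vnormSq v = v ⬝ᵥ v := by
  simp only [vnormSq, dotProduct, sq]

lemma vnormSq_mulVec_of_transpose_mul_self {M : Matrix (Fin m) (Fin l) ℝ} (h : Mᵀ * M = 1)
    (x : Fin l → ℝ) : vnormSq (M *ᵥ x) = vnormSq x := by
  rw [vnormSq_eq_dotProduct, vnormSq_eq_dotProduct, dotProduct_mulVec, ← vecMul_transpose,
    vecMul_vecMul, h, vecMul_one]

end Norms

lemma sum_sq_le_sum_inv_sq_mul_sum_sq {ι : Type*} [Fintype ι] {μ : ι → ℝ} (hμ : ∀ k, 0 < μ k)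
    {c : ℝ} (hc : 0 ≤ c) (z : ι → ℝ) :
    ∑ k, z k ^ 2 ≤ (∑ k, (μ k ^ 2)⁻¹) * ∑ k, ((μ k + c) * z k) ^ 2 := by
  rw [Finset.sum_mul]
  refine Finset.sum_le_sum fun k _ => ?_
  have hμc : (μ k * z k) ^ 2 ≤ ((μ k + c) * z k) ^ 2 := by
    rw [mul_pow, mul_pow]
    gcongr
    · exact (hμ k).le
    · linarith
  calc z k ^ 2 = (μ k ^ 2)⁻¹ * (μ k * z k) ^ 2 := by field_simp [(hμ k).ne']
    _ ≤ (μ k ^ 2)⁻¹ * ∑ j, ((μ j + c) * z j) ^ 2 := by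
        gcongr
        exact hμc.trans (Finset.single_le_sum (f := fun j => ((μ j + c) * z j) ^ 2)
          (fun j _ => sq_nonneg _) (Finset.mem_univ k))

section Spectral

variable {m : ℕ} {A : Matrix (Fin m) (Fin m) ℝ}

lemma Matrix.IsHermitian.add_smul_one_mulVec_eigenvectorUnitary (hA : A.IsHermitian) (c : ℝ)
    (z : Fin m → ℝ) :
    (A + c • 1) *ᵥ ((hA.eigenvectorUnitary : Matrix (Fin m) (Fin m) ℝ) *ᵥ z) =
      (hA.eigenvectorUnitary : Matrix (Fin m) (Fin m) ℝ) *ᵥ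
        fun k => (hA.eigenvalues k + c) * z k := by
  set V : Matrix (Fin m) (Fin m) ℝ := ↑hA.eigenvectorUnitary
  have hAV : A * V = V * diagonal hA.eigenvalues := by
    conv_lhs => rw [hA.spectral_theorem]
    rw [Unitary.conjStarAlgAut_apply, Matrix.mul_assoc, Unitary.coe_star_mul_self, Matrix.mul_one]
    rfl
  have : (fun k => (hA.eigenvalues k + c) * z k) = diagonal hA.eigenvalues *ᵥ z + c • z := by
    ext k
    simp [mulVec_diagonal, add_mul]
  rw [this, add_mulVec, mulVec_mulVec, hAV, ← mulVec_mulVec, mulVec_add, smul_mulVec,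
    one_mulVec, mulVec_smul]

lemma vnormSq_le_of_posDef (hA : A.PosDef) {c : ℝ} (hc : 0 ≤ c) (x : Fin m → ℝ) :
    vnormSq x ≤ (∑ k, (hA.1.eigenvalues k ^ 2)⁻¹) * vnormSq ((A + c • 1) *ᵥ x) := by
  set V : Matrix (Fin m) (Fin m) ℝ := ↑hA.1.eigenvectorUnitary
  have hV : star V = Vᵀ := by rw [star_eq_conjTranspose, conjTranspose_eq_transpose_of_trivial]
  have hVV : Vᵀ * V = 1 := hV ▸ Unitary.coe_star_mul_self hA.1.eigenvectorUnitary
  have hVVt : V * Vᵀ = 1 := hV ▸ Unitary.coe_mul_star_self hA.1.eigenvectorUnitary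
  have hx : x = V *ᵥ (Vᵀ *ᵥ x) := by rw [mulVec_mulVec, hVVt, one_mulVec]
  rw [hx, hA.1.add_smul_one_mulVec_eigenvectorUnitary, vnormSq_mulVec_of_transpose_mul_self hVV,
    vnormSq_mulVec_of_transpose_mul_self hVV]
  exact sum_sq_le_sum_inv_sq_mul_sum_sq hA.eigenvalues_pos hc _

end Spectral

section SmoothingSystem

variable {n p q : ℕ} {T Q₁ : Matrix (Fin n) (Fin p) ℝ} {Q₂ : Matrix (Fin n) (Fin q) ℝ}
  {R : Matrix (Fin p) (Fin p) ℝ}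

lemma eq_mulVec_transpose_mulVec_of_transpose_mulVec_eq_zero
    (hQ : Q₁ * Q₁ᵀ + Q₂ * Q₂ᵀ = 1) (hR : IsUnit R) (hT : T = Q₁ * R) {v : Fin n → ℝ}
    (hv : Tᵀ *ᵥ v = 0) : v = Q₂ *ᵥ (Q₂ᵀ *ᵥ v) := by
  have hQ₁v : Q₁ᵀ *ᵥ v = 0 := by
    refine mulVec_injective_iff_isUnit.mpr ((isUnit_transpose R).mpr hR) ?_
    rw [mulVec_mulVec, ← transpose_mul, ← hT, hv, mulVec_zero]
  calc v = (Q₁ * Q₁ᵀ + Q₂ * Q₂ᵀ) *ᵥ v := by rw [hQ, one_mulVec]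
    _ = Q₂ *ᵥ (Q₂ᵀ *ᵥ v) := by
        rw [add_mulVec, ← mulVec_mulVec, hQ₁v, mulVec_zero, zero_add, mulVec_mulVec]

lemma transpose_mul_mul_add_smul_mulVec_eq (hQ₂ : Q₂ᵀ * Q₂ = 1) (hQ₂T : Q₂ᵀ * T = 0)
    {S : Matrix (Fin n) (Fin n) ℝ} {c : ℝ} {v y : Fin n → ℝ} {d : Fin p → ℝ}
    (hv : v = Q₂ *ᵥ (Q₂ᵀ *ᵥ v)) (h : T *ᵥ d + (S + c • 1) *ᵥ v = y) :
    (Q₂ᵀ * S * Q₂ + c • 1) *ᵥ (Q₂ᵀ *ᵥ v) = Q₂ᵀ *ᵥ y := by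
  have hM : Q₂ᵀ * S * Q₂ + c • 1 = Q₂ᵀ * (S + c • 1) * Q₂ := by
    rw [Matrix.mul_add, Matrix.add_mul, Matrix.mul_smul, Matrix.mul_one, Matrix.smul_mul, hQ₂]
  calc (Q₂ᵀ * S * Q₂ + c • 1) *ᵥ (Q₂ᵀ *ᵥ v)
      = Q₂ᵀ *ᵥ ((S + c • 1) *ᵥ (Q₂ *ᵥ (Q₂ᵀ *ᵥ v))) := by
        rw [hM]; simp only [mulVec_mulVec, Matrix.mul_assoc]
    _ = Q₂ᵀ *ᵥ y := by rw [← hv, ← h, mulVec_add, mulVec_mulVec d, hQ₂T, zero_mulVec, zero_add]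

lemma vnormSq_sub_le_of_add_smul_mulVec_eq {m : ℕ} {At Ac : Matrix (Fin m) (Fin m) ℝ}
    (hAt : At.PosDef) (hAc : Ac.PosDef) {c : ℝ} (hc : 0 ≤ c) {vt vc w : Fin m → ℝ}
    (ht : (At + c • 1) *ᵥ vt = w) (hc' : (Ac + c • 1) *ᵥ vc = w) :
    vnormSq (vc - vt) ≤ frobSq (Ac - At) * vnormSq w *
      (∑ k, (hAt.1.eigenvalues k ^ 2)⁻¹) * (∑ k, (hAc.1.eigenvalues k ^ 2)⁻¹) := by
  have hdiff : (Ac + c • 1) *ᵥ (vc - vt) = (At - Ac) *ᵥ vt := by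
    rw [mulVec_sub, hc', ← ht, ← sub_mulVec, add_sub_add_right_eq_sub]
  calc vnormSq (vc - vt)
      ≤ (∑ k, (hAc.1.eigenvalues k ^ 2)⁻¹) * vnormSq ((At - Ac) *ᵥ vt) :=
        hdiff ▸ vnormSq_le_of_posDef hAc hc _
    _ ≤ (∑ k, (hAc.1.eigenvalues k ^ 2)⁻¹) *
          (frobSq (At - Ac) * ((∑ k, (hAt.1.eigenvalues k ^ 2)⁻¹) * vnormSq w)) := by
        gcongr
        refine (vnormSq_mulVec_le _ _).trans (mul_le_mul_of_nonneg_left ?_ (frobSq_nonneg _))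
        exact ht ▸ vnormSq_le_of_posDef hAt hc vt
    _ = _ := by rw [frobSq_sub_comm]; ring

lemma vnormSq_sub_le_of_smoothing_systems (hQ₂ : Q₂ᵀ * Q₂ = 1) (hQ₁₂ : Q₁ᵀ * Q₂ = 0)
    (hQ : Q₁ * Q₁ᵀ + Q₂ * Q₂ᵀ = 1) (hR : IsUnit R) (hT : T = Q₁ * R)
    {St Sc : Matrix (Fin n) (Fin n) ℝ} (hpdt : (Q₂ᵀ * St * Q₂).PosDef)
    (hpdc : (Q₂ᵀ * Sc * Q₂).PosDef) {c : ℝ} (hc : 0 ≤ c) {y ct cc : Fin n → ℝ}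
    {dt dc : Fin p → ℝ} (hcdt : T *ᵥ dt + (St + c • 1) *ᵥ ct = y) (hct0 : Tᵀ *ᵥ ct = 0)
    (hcdc : T *ᵥ dc + (Sc + c • 1) *ᵥ cc = y) (hcc0 : Tᵀ *ᵥ cc = 0) :
    vnormSq (cc - ct) ≤ frobSq Q₂ ^ 3 * vnormSq (Q₂ᵀ *ᵥ y) *
      (∑ k, (hpdt.1.eigenvalues k ^ 2)⁻¹) * (∑ k, (hpdc.1.eigenvalues k ^ 2)⁻¹) *
        frobSq (Sc - St) := by
  have hQ₂T : Q₂ᵀ * T = 0 := by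
    have : Q₂ᵀ * Q₁ = 0 := by simpa using congrArg transpose hQ₁₂
    rw [hT, ← Matrix.mul_assoc, this, Matrix.zero_mul]
  have hct := eq_mulVec_transpose_mulVec_of_transpose_mulVec_eq_zero hQ hR hT hct0
  have hcc := eq_mulVec_transpose_mulVec_of_transpose_mulVec_eq_zero hQ hR hT hcc0
  have hsub : cc - ct = Q₂ *ᵥ (Q₂ᵀ *ᵥ cc - Q₂ᵀ *ᵥ ct) := by rw [mulVec_sub, ← hcc, ← hct]
  have hQ₂sq : frobSq Q₂ ^ 2 ≤ frobSq Q₂ ^ 3 := by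
    rw [frobSq_eq_of_transpose_mul_self hQ₂]
    norm_cast
    rcases q with _ | q
    · simp
    · exact Nat.pow_le_pow_right q.succ_pos (by norm_num)
  calc vnormSq (cc - ct) = vnormSq (Q₂ᵀ *ᵥ cc - Q₂ᵀ *ᵥ ct) := by
        rw [hsub, vnormSq_mulVec_of_transpose_mul_self hQ₂]
    _ ≤ frobSq (Q₂ᵀ * Sc * Q₂ - Q₂ᵀ * St * Q₂) * vnormSq (Q₂ᵀ *ᵥ y) *
          (∑ k, (hpdt.1.eigenvalues k ^ 2)⁻¹) * (∑ k, (hpdc.1.eigenvalues k ^ 2)⁻¹) :=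
        vnormSq_sub_le_of_add_smul_mulVec_eq hpdt hpdc hc
          (transpose_mul_mul_add_smul_mulVec_eq hQ₂ hQ₂T hct hcdt)
          (transpose_mul_mul_add_smul_mulVec_eq hQ₂ hQ₂T hcc hcdc)
    _ ≤ frobSq Q₂ ^ 3 * frobSq (Sc - St) * vnormSq (Q₂ᵀ *ᵥ y) *
          (∑ k, (hpdt.1.eigenvalues k ^ 2)⁻¹) * (∑ k, (hpdc.1.eigenvalues k ^ 2)⁻¹) := by
        have := vnormSq_nonneg (Q₂ᵀ *ᵥ y)
        gcongr
        rw [← Matrix.sub_mul, ← Matrix.mul_sub]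
        exact (frobSq_transpose_mul_mul_le _ _).trans
          (mul_le_mul_of_nonneg_right hQ₂sq (frobSq_nonneg _))
    _ = _ := by ring

end SmoothingSystem

lemma add_sq_le_three_mul (a b c : ℝ) : (a + b + c) ^ 2 ≤ 3 * (a ^ 2 + b ^ 2 + c ^ 2) := by
  nlinarith [sq_nonneg (a - b), sq_nonneg (b - c), sq_nonneg (a - c)]

section Coefficients

variable {m : ℕ}

lemma sq_sum_mul_le_of_abs_le {u : Fin m → ℝ} {κ : ℝ} (hu : ∀ i, |u i| ≤ κ) (v : Fin m → ℝ) :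
    (∑ i, v i * u i) ^ 2 ≤ vnormSq v * (m * κ ^ 2) :=
  (sq_sum_mul_le v u).trans (mul_le_mul_of_nonneg_left (vnormSq_le_of_abs_le hu) (vnormSq_nonneg v))

lemma sum_sq_mul_sum_mul_le {U : Fin m → ℕ → ℝ} {κ : ℝ} {s : Finset ℕ}
    (hU : ∀ i, ∀ k ∈ s, |U i k| ≤ κ) (δ : ℕ → ℝ) (v : Fin m → ℝ) :
    ∑ k ∈ s, (δ k * ∑ i, v i * U i k) ^ 2 ≤ vnormSq v * m * κ ^ 2 * ∑ k ∈ s, δ k ^ 2 := by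
  rw [Finset.mul_sum]
  refine Finset.sum_le_sum fun k hk => ?_
  calc (δ k * ∑ i, v i * U i k) ^ 2 = δ k ^ 2 * (∑ i, v i * U i k) ^ 2 := mul_pow _ _ _
    _ ≤ δ k ^ 2 * (vnormSq v * (m * κ ^ 2)) := by
        gcongr
        exact sq_sum_mul_le_of_abs_le (fun i => hU i k hk) v
    _ = vnormSq v * m * κ ^ 2 * δ k ^ 2 := by ring

lemma sq_mul_sum_mul_sub_mul_sum_mul_le {u : Fin m → ℝ} {κ : ℝ} (hu : ∀ i, |u i| ≤ κ)
    (dc d : ℝ) (vc v uc : Fin m → ℝ) :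
    (dc * ∑ i, vc i * uc i - d * ∑ i, v i * u i) ^ 2 ≤
      3 * vnormSq vc * (dc ^ 2 * ∑ i, (uc i - u i) ^ 2) +
        3 * m * κ ^ 2 * vnormSq vc * (dc - d) ^ 2 +
        3 * m * κ ^ 2 * vnormSq (vc - v) * d ^ 2 := by
  have hsplit : dc * ∑ i, vc i * uc i - d * ∑ i, v i * u i =
      dc * ∑ i, vc i * (uc i - u i) + (dc - d) * ∑ i, vc i * u i +
        d * ∑ i, (vc i - v i) * u i := by
    simp only [mul_sub, sub_mul, Finset.sum_sub_distrib]
    ring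
  have h₁ : (∑ i, vc i * (uc i - u i)) ^ 2 ≤ vnormSq vc * ∑ i, (uc i - u i) ^ 2 :=
    sq_sum_mul_le vc (uc - u)
  have h₂ := sq_sum_mul_le_of_abs_le hu vc
  have h₃ : (∑ i, (vc i - v i) * u i) ^ 2 ≤ vnormSq (vc - v) * (m * κ ^ 2) :=
    sq_sum_mul_le_of_abs_le hu (vc - v)
  rw [hsplit]
  refine (add_sq_le_three_mul _ _ _).trans ?_
  simp only [mul_pow]
  linarith [mul_le_mul_of_nonneg_left h₁ (sq_nonneg dc),
    mul_le_mul_of_nonneg_left h₂ (sq_nonneg (dc - d)), mul_le_mul_of_nonneg_left h₃ (sq_nonneg d)]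

lemma sum_sq_mul_sum_mul_sub_mul_sum_mul_le {U : Fin m → ℕ → ℝ} {κ : ℝ}
    (hU : ∀ i k, |U i k| ≤ κ) (δc δ : ℕ → ℝ) (cc ct : Fin m → ℝ) (Uc : Fin m → ℕ → ℝ)
    (s : Finset ℕ) :
    ∑ k ∈ s, (δc k * ∑ i, cc i * Uc i k - δ k * ∑ i, ct i * U i k) ^ 2 ≤
      3 * vnormSq cc * (∑ k ∈ s, δc k ^ 2 * ∑ i, (Uc i k - U i k) ^ 2) +
        3 * m * κ ^ 2 * vnormSq cc * (∑ k ∈ s, (δc k - δ k) ^ 2) +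
        3 * m * κ ^ 2 * vnormSq (cc - ct) * (∑ k ∈ s, δ k ^ 2) := by
  rw [Finset.mul_sum, Finset.mul_sum, Finset.mul_sum, ← Finset.sum_add_distrib,
    ← Finset.sum_add_distrib]
  exact Finset.sum_le_sum fun k _ =>
    sq_mul_sum_mul_sub_mul_sum_mul_le (fun i => hU i k) _ _ cc ct fun i => Uc i k

end Coefficients

section Hilbert

variable {ι H : Type*} [NormedAddCommGroup H] [InnerProductSpace ℝ H]

lemma Orthonormal.norm_sum_smul_sq {Φ : ι → H} (hΦ : Orthonormal ℝ Φ) (b : ι → ℝ)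
    (s : Finset ι) : ‖∑ k ∈ s, b k • Φ k‖ ^ 2 = ∑ k ∈ s, b k ^ 2 := by
  rw [← real_inner_self_eq_norm_sq, hΦ.inner_sum]
  simp only [conj_trivial, sq]

lemma norm_sum_smul_sq_le (a : ι → ℝ) (w : ι → H) (s : Finset ι) :
    ‖∑ k ∈ s, a k • w k‖ ^ 2 ≤ (∑ k ∈ s, a k ^ 2) * ∑ k ∈ s, ‖w k‖ ^ 2 :=
  calc ‖∑ k ∈ s, a k • w k‖ ^ 2 ≤ (∑ k ∈ s, |a k| * ‖w k‖) ^ 2 := by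
        gcongr
        refine (norm_sum_le _ _).trans_eq (Finset.sum_congr rfl fun k _ => ?_)
        rw [norm_smul, Real.norm_eq_abs]
    _ ≤ (∑ k ∈ s, |a k| ^ 2) * ∑ k ∈ s, ‖w k‖ ^ 2 := Finset.sum_mul_sq_le_sq_mul_sq _ _ _
    _ = (∑ k ∈ s, a k ^ 2) * ∑ k ∈ s, ‖w k‖ ^ 2 := by simp only [sq_abs]

lemma norm_sum_smul_sub_sum_smul_sq_le {Φ : ι → H} (hΦ : Orthonormal ℝ Φ) (Φc : ι → H)
    (a b : ι → ℝ) (s : Finset ι) :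
    ‖∑ k ∈ s, a k • Φc k - ∑ k ∈ s, b k • Φ k‖ ^ 2 ≤
      2 * (∑ k ∈ s, a k ^ 2) * (∑ k ∈ s, ‖Φc k - Φ k‖ ^ 2) + 2 * ∑ k ∈ s, (a k - b k) ^ 2 := by
  have hsplit : ∑ k ∈ s, a k • Φc k - ∑ k ∈ s, b k • Φ k =
      ∑ k ∈ s, a k • (Φc k - Φ k) + ∑ k ∈ s, (a k - b k) • Φ k := by
    simp only [smul_sub, sub_smul, Finset.sum_sub_distrib]
    abel
  calc ‖∑ k ∈ s, a k • Φc k - ∑ k ∈ s, b k • Φ k‖ ^ 2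
      ≤ 2 * (‖∑ k ∈ s, a k • (Φc k - Φ k)‖ ^ 2 + ‖∑ k ∈ s, (a k - b k) • Φ k‖ ^ 2) := by
        rw [hsplit]
        exact (pow_le_pow_left₀ (norm_nonneg _) (norm_add_le _ _) 2).trans add_sq_le
    _ ≤ _ := by
        rw [hΦ.norm_sum_smul_sq]
        linarith [norm_sum_smul_sq_le a (fun k => Φc k - Φ k) s]

end Hilbert

theorem stmt17_general
    (n p : ℕ)
    (y : Fin n → ℝ) (lam : ℝ) (hlam : 0 < lam)
    (T Q₁ : Matrix (Fin n) (Fin p) ℝ) (Q₂ : Matrix (Fin n) (Fin (n - p)) ℝ)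
    (R : Matrix (Fin p) (Fin p) ℝ)
    (hQ₂ : Q₂ᵀ * Q₂ = 1) (hQ₁₂ : Q₁ᵀ * Q₂ = 0)
    (hQ : Q₁ * Q₁ᵀ + Q₂ * Q₂ᵀ = 1)
    (hR : IsUnit R) (hT : T = Q₁ * R)
    (K : ℕ) (κ κ' : ℝ)
    (δ : ℕ → ℝ)
    (δc : ℕ → ℝ)
    (U : Fin n → ℕ → ℝ) (hU : ∀ i k, |U i k| ≤ κ)
    (Uc : Fin n → ℕ → ℝ) (hUc : ∀ i, ∀ k < K, |Uc i k| ≤ κ')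
    (St Sc : Matrix (Fin n) (Fin n) ℝ)
    (hpdt : (Q₂ᵀ * St * Q₂).PosDef) (hpdc : (Q₂ᵀ * Sc * Q₂).PosDef)
    (ct : Fin n → ℝ) (dt : Fin p → ℝ)
    (hcdt : T *ᵥ dt + (St + ((n : ℝ) * lam) • 1) *ᵥ ct = y) (hct0 : Tᵀ *ᵥ ct = 0)
    (cc : Fin n → ℝ) (dc : Fin p → ℝ)
    (hcdc : T *ᵥ dc + (Sc + ((n : ℝ) * lam) • 1) *ᵥ cc = y) (hcc0 : Tᵀ *ᵥ cc = 0)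
    {H : Type*} [NormedAddCommGroup H] [InnerProductSpace ℝ H]
    (Φ Φc : ℕ → H) (hΦ : Orthonormal ℝ Φ) :
    ‖(∑ k ∈ Finset.range K, (δc k * ∑ i, cc i * Uc i k) • Φc k) -
        (∑ k ∈ Finset.range K, (δ k * ∑ i, ct i * U i k) • Φ k)‖ ^ 2 ≤
      2 * (vnormSq cc * (n : ℝ) * κ' ^ 2 * (∑ k ∈ Finset.range K, δc k ^ 2)) *
          (∑ k ∈ Finset.range K, ‖Φc k - Φ k‖ ^ 2) +
        6 * vnormSq cc *
          (∑ k ∈ Finset.range K, δc k ^ 2 * ∑ i, (Uc i k - U i k) ^ 2) +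
        6 * (n : ℝ) * κ ^ 2 * vnormSq cc * (∑ k ∈ Finset.range K, (δc k - δ k) ^ 2) +
        6 * ((n : ℝ) * κ ^ 2 * (∑ k ∈ Finset.range K, δ k ^ 2) *
            ((frobSq Q₂) ^ 3 * vnormSq (Q₂ᵀ *ᵥ y)) *
            (∑ k, ((hpdt.1.eigenvalues k) ^ 2)⁻¹) *
            (∑ k, ((hpdc.1.eigenvalues k) ^ 2)⁻¹)) * frobSq (Sc - St) := by
  have hcoef := sum_sq_mul_sum_mul_le (s := Finset.range K)
    (fun i k hk => hUc i k (Finset.mem_range.mp hk)) δc cc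
  have hdiff := sum_sq_mul_sum_mul_sub_mul_sum_mul_le hU δc δ cc ct Uc (Finset.range K)
  have hkey := vnormSq_sub_le_of_smoothing_systems hQ₂ hQ₁₂ hQ hR hT hpdt hpdc
    (by positivity : (0 : ℝ) ≤ n * lam) hcdt hct0 hcdc hcc0
  have hΦ₀ : 0 ≤ ∑ k ∈ Finset.range K, ‖Φc k - Φ k‖ ^ 2 := by positivity
  have hδ₀ : 0 ≤ (n : ℝ) * κ ^ 2 * ∑ k ∈ Finset.range K, δ k ^ 2 := by positivity
  refine (norm_sum_smul_sub_sum_smul_sq_le hΦ Φc _ _ _).trans ?_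
  linarith [mul_le_mul_of_nonneg_right hcoef hΦ₀, mul_le_mul_of_nonneg_left hkey hδ₀]

/-- Theorem 2, second bound: in the estimated-eigensystem smoothing spline
setting, `‖f̌₁ − f̃₁‖² ≤ 2ζ₄ Σ_k ‖Φ̌_k − Φ_k‖² + 6‖č‖² Σ_k [δ̌_k² Σ_i (Ǔ_{ik} − U_{ik})²]
  + 6 n κ² ‖č‖² Σ_k (δ̌_k − δ_k)² + 6 ζ₃' ‖Σ̌ − Σ̃‖_F²`, where
`ζ₄ = ‖č‖² n κ'² C'_K` and `ζ₃' = n κ² C_K ζ₁ B̃ B̌`. -/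
theorem stmt17
    (n p : ℕ) (hp : 1 ≤ p) (hpn : p < n)
    (y : Fin n → ℝ) (lam : ℝ) (hlam : 0 < lam)
    (T Q₁ : Matrix (Fin n) (Fin p) ℝ) (Q₂ : Matrix (Fin n) (Fin (n - p)) ℝ)
    (R : Matrix (Fin p) (Fin p) ℝ)
    (hQ₁ : Q₁ᵀ * Q₁ = 1) (hQ₂ : Q₂ᵀ * Q₂ = 1) (hQ₁₂ : Q₁ᵀ * Q₂ = 0)
    (hQ : Q₁ * Q₁ᵀ + Q₂ * Q₂ᵀ = 1)
    (hR : IsUnit R) (hRtri : R.BlockTriangular id) (hT : T = Q₁ * R)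
    (K : ℕ) (hK : 1 ≤ K) (κ κ' : ℝ) (hκ : 0 < κ) (hκ' : 0 < κ')
    (δ : ℕ → ℝ) (hδ0 : ∀ k, 0 ≤ δ k) (hδmono : ∀ k, δ (k + 1) ≤ δ k) (hδsum : Summable δ)
    (δc : ℕ → ℝ) (hδc0 : ∀ k < K, 0 ≤ δc k)
    (U : Fin n → ℕ → ℝ) (hU : ∀ i k, |U i k| ≤ κ)
    (Uc : Fin n → ℕ → ℝ) (hUc : ∀ i, ∀ k < K, |Uc i k| ≤ κ')
    (St Sc : Matrix (Fin n) (Fin n) ℝ)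
    (hSt : ∀ i j, St i j = ∑ k ∈ Finset.range K, δ k * U i k * U j k)
    (hSc : ∀ i j, Sc i j = ∑ k ∈ Finset.range K, δc k * Uc i k * Uc j k)
    (hStpsd : St.PosSemidef) (hScpsd : Sc.PosSemidef)
    (hpdt : (Q₂ᵀ * St * Q₂).PosDef) (hpdc : (Q₂ᵀ * Sc * Q₂).PosDef)
    (hA : (T * ((Tᵀ * T)⁻¹ * (Tᵀ * T)⁻¹) * Tᵀ).IsHermitian)
    (ct : Fin n → ℝ) (dt : Fin p → ℝ)
    (hcdt : T *ᵥ dt + (St + ((n : ℝ) * lam) • 1) *ᵥ ct = y) (hct0 : Tᵀ *ᵥ ct = 0)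
    (cc : Fin n → ℝ) (dc : Fin p → ℝ)
    (hcdc : T *ᵥ dc + (Sc + ((n : ℝ) * lam) • 1) *ᵥ cc = y) (hcc0 : Tᵀ *ᵥ cc = 0)
    {H : Type*} [NormedAddCommGroup H] [InnerProductSpace ℝ H] [CompleteSpace H]
    (φ : Fin p → H) (Φ Φc : ℕ → H) (hφ : Orthonormal ℝ φ) (hΦ : Orthonormal ℝ Φ) :
    ‖(∑ k ∈ Finset.range K, (δc k * ∑ i, cc i * Uc i k) • Φc k) -
        (∑ k ∈ Finset.range K, (δ k * ∑ i, ct i * U i k) • Φ k)‖ ^ 2 ≤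
      2 * (vnormSq cc * (n : ℝ) * κ' ^ 2 * (∑ k ∈ Finset.range K, δc k ^ 2)) *
          (∑ k ∈ Finset.range K, ‖Φc k - Φ k‖ ^ 2) +
        6 * vnormSq cc *
          (∑ k ∈ Finset.range K, δc k ^ 2 * ∑ i, (Uc i k - U i k) ^ 2) +
        6 * (n : ℝ) * κ ^ 2 * vnormSq cc * (∑ k ∈ Finset.range K, (δc k - δ k) ^ 2) +
        6 * ((n : ℝ) * κ ^ 2 * (∑ k ∈ Finset.range K, δ k ^ 2) *
            ((frobSq Q₂) ^ 3 * vnormSq (Q₂ᵀ *ᵥ y)) *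
            (∑ k, ((hpdt.1.eigenvalues k) ^ 2)⁻¹) *
            (∑ k, ((hpdc.1.eigenvalues k) ^ 2)⁻¹)) * frobSq (Sc - St) :=
  stmt17_general n p y lam hlam T Q₁ Q₂ R hQ₂ hQ₁₂ hQ hR hT K κ κ' δ δc U hU Uc hUc St Sc hpdt hpdc
    ct dt hcdt hct0 cc dc hcdc hcc0 Φ Φc hΦ
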